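/- Let Ω ⊂ ℝⁿ be a bounded domain with |θ| + 1/ι₀ ≤ K, and let u : Ω → ℝⁿ be a C¹ vector field. Then ‖div u‖_{L^4(Ω)}² ≤ C(K) ‖u‖_{L^∞(Ω)} ‖div u‖_{H^1(Ω)}. -/

import Mathlib

open MeasureTheory Bornology

/-- Partial derivative ∂_i. -/
noncomputable def pd (n : ℕ) (i : Fin n) (f : (Fin n → ℝ) → ℝ) (x : Fin n → ℝ) : ℝ :=
  fderiv ℝ f x (Pi.single i 1)

/-- Divergence of a vector field on ℝⁿ. -/
noncomputable def divg (n : ℕ) (u : (Fin n → ℝ) → Fin n → ℝ) (x : Fin n → ℝ) : ℝ :=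
  ∑ i, pd n i (fun y => u y i) x


section helpers
variable {n : ℕ}

lemma pd_of_hasFDerivAt {f : (Fin n → ℝ) → ℝ} {x} {f' : (Fin n → ℝ) →L[ℝ] ℝ}
    (h : HasFDerivAt f f' x) (i : Fin n) : pd n i f x = f' (Pi.single i 1) := by
  rw [pd, h.fderiv]

lemma pd_mul {f h : (Fin n → ℝ) → ℝ} {x} (hf : DifferentiableAt ℝ f x)
    (hh : DifferentiableAt ℝ h x) (i : Fin n) :
    pd n i (fun y => f y * h y) x = f x * pd n i h x + h x * pd n i f x := by
  simp [pd, fderiv_fun_mul hf hh]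

lemma pd_const_mul {f : (Fin n → ℝ) → ℝ} {x} (c : ℝ) (hf : DifferentiableAt ℝ f x) (i : Fin n) :
    pd n i (fun y => c * f y) x = c * pd n i f x := by
  simp [pd, fderiv_const_mul hf c]

lemma pd_sub {f h : (Fin n → ℝ) → ℝ} {x} (hf : DifferentiableAt ℝ f x)
    (hh : DifferentiableAt ℝ h x) (i : Fin n) :
    pd n i (fun y => f y - h y) x = pd n i f x - pd n i h x := by
  simp [pd, fderiv_fun_sub hf hh]

lemma pd_pow3 {f : (Fin n → ℝ) → ℝ} {x} (hf : DifferentiableAt ℝ f x) (i : Fin n) :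
    pd n i (fun y => f y ^ 3) x = 3 * f x ^ 2 * pd n i f x := by
  have : (fun y => f y ^ 3) = fun y => f y * (f y * f y) := by funext y; ring
  rw [this, pd_mul (h := fun y => f y * f y) hf (hf.mul hf) i, pd_mul hf hf i]
  ring

lemma abs_cube_eq (s : ℝ) : (s ^ 2) ^ ((3:ℝ)/2) = |s| ^ 3 := by
  rw [← sq_abs, ← Real.rpow_natCast |s| 2, ← Real.rpow_mul (abs_nonneg s),
    ← Real.rpow_natCast |s| 3]
  norm_num

lemma hasDerivAt_abs_cube (t : ℝ) :
    HasDerivAt (fun s : ℝ => |s| ^ 3) (3 * |t| * t) t := by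
  have h1 : HasDerivAt (fun s : ℝ => s ^ 2) (2 * t) t := by
    simpa using hasDerivAt_pow 2 t
  have h2 : HasDerivAt (fun r : ℝ => r ^ ((3:ℝ)/2))
      (((3:ℝ)/2) * (t ^ 2) ^ ((3:ℝ)/2 - 1)) (t ^ 2) :=
    Real.hasDerivAt_rpow_const (Or.inr (by norm_num))
  have h3 : HasDerivAt (fun s : ℝ => (s ^ 2) ^ ((3:ℝ)/2))
      ((((3:ℝ)/2) * (t ^ 2) ^ ((3:ℝ)/2 - 1)) * (2 * t)) t :=
    HasDerivAt.comp (h₂ := fun r : ℝ => r ^ ((3:ℝ)/2)) (h := fun s : ℝ => s ^ 2) t h2 h1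
  have e : (fun s : ℝ => (s ^ 2) ^ ((3:ℝ)/2)) = fun s : ℝ => |s| ^ 3 := by
    funext s; exact abs_cube_eq s
  rw [e] at h3
  convert h3 using 1
  have : ((3:ℝ)/2 - 1) = (1:ℝ)/2 := by norm_num
  rw [this, ← Real.sqrt_eq_rpow, Real.sqrt_sq_eq_abs]
  ring

lemma pd_abs_cube {f : (Fin n → ℝ) → ℝ} {x} (hf : DifferentiableAt ℝ f x) (i : Fin n) :
    pd n i (fun y => |f y| ^ 3) x = 3 * |f x| * f x * pd n i f x := by
  have h : HasFDerivAt (fun y => |f y| ^ 3) ((3 * |f x| * f x) • fderiv ℝ f x) x :=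
    (hasDerivAt_abs_cube (f x)).comp_hasFDerivAt x hf.hasFDerivAt
  rw [pd_of_hasFDerivAt h i]
  simp [pd, mul_comm]

end helpers

section helpers2
variable {n : ℕ}

lemma contDiff_pd {f : (Fin n → ℝ) → ℝ} (hf : ContDiff ℝ 2 f) (i : Fin n) :
    ContDiff ℝ 1 (fun x => pd n i f x) :=
  (hf.fderiv_right (m := 1) (by norm_num)).clm_apply contDiff_const

lemma contDiff_divg {u : (Fin n → ℝ) → Fin n → ℝ} (hu : ContDiff ℝ 2 u) :
    ContDiff ℝ 1 (divg n u) :=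
  ContDiff.sum fun i _ => contDiff_pd (contDiff_pi.1 hu i) i

lemma continuous_pd1 {f : (Fin n → ℝ) → ℝ} (hf : ContDiff ℝ 1 f) (i : Fin n) :
    Continuous (pd n i f) :=
  (ContinuousLinearMap.apply ℝ ℝ ((Pi.single i 1 : Fin n → ℝ))).continuous.comp
    (hf.continuous_fderiv one_ne_zero)

lemma continuous_divg1 {N : (Fin n → ℝ) → Fin n → ℝ} (hN : ContDiff ℝ 1 N) :
    Continuous (divg n N) :=
  continuous_finset_sum _ fun i _ => continuous_pd1 (contDiff_pi.1 hN i) i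

lemma contDiff_rpow32 : ContDiff ℝ 1 (fun r : ℝ => r ^ ((3:ℝ)/2)) := by
  rw [contDiff_one_iff_deriv]
  refine ⟨fun r => (Real.hasDerivAt_rpow_const (Or.inr (by norm_num))).differentiableAt, ?_⟩
  have e : deriv (fun r : ℝ => r ^ ((3:ℝ)/2)) = fun r => ((3:ℝ)/2) * r ^ ((3:ℝ)/2 - 1) :=
    funext fun r => (Real.hasDerivAt_rpow_const (Or.inr (by norm_num))).deriv
  rw [e]
  exact continuous_const.mul (Real.continuous_rpow_const (by norm_num))

lemma contDiff_abs_cube {f : (Fin n → ℝ) → ℝ} (hf : ContDiff ℝ 1 f) :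
    ContDiff ℝ 1 (fun y => |f y| ^ 3) := by
  have h : ContDiff ℝ 1 (fun y => (f y ^ 2) ^ ((3:ℝ)/2)) := contDiff_rpow32.comp (hf.pow 2)
  have e : (fun y => (f y ^ 2) ^ ((3:ℝ)/2)) = fun y => |f y| ^ 3 := by
    funext y; exact abs_cube_eq (f y)
  rwa [e] at h

lemma integrableOn_cont {Ω : Set (Fin n → ℝ)} (hb : IsBounded Ω) {f : (Fin n → ℝ) → ℝ}
    (hf : Continuous f) : IntegrableOn f Ω := by
  have hc : IsCompact (closure Ω) :=
    Metric.isCompact_of_isClosed_isBounded isClosed_closure hb.closure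
  exact (hf.continuousOn.integrableOn_compact hc).mono_set subset_closure

lemma memLp_cont {Ω : Set (Fin n → ℝ)} (hm : MeasurableSet Ω) (hb : IsBounded Ω)
    {f : (Fin n → ℝ) → ℝ} (hf : Continuous f) (p : ENNReal) :
    MemLp f p (volume.restrict Ω) := by
  have hc : IsCompact (closure Ω) :=
    Metric.isCompact_of_isClosed_isBounded isClosed_closure hb.closure
  obtain ⟨C, hC⟩ := hc.exists_bound_of_continuousOn hf.continuousOn
  have : IsFiniteMeasure (volume.restrict Ω) :=
    ⟨by rw [Measure.restrict_apply_univ]; exact hb.measure_lt_top⟩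
  refine MemLp.of_bound hf.aestronglyMeasurable C ?_
  filter_upwards [ae_restrict_mem hm] with x hx
  exact hC x (subset_closure hx)

lemma holder_sq {Ω : Set (Fin n → ℝ)} (hm : MeasurableSet Ω) (hb : IsBounded Ω)
    {f h : (Fin n → ℝ) → ℝ} (hf : Continuous f) (hh : Continuous h) (hh0 : ∀ x, 0 ≤ h x) :
    ∫ x in Ω, f x ^ 2 * h x
      ≤ (∫ x in Ω, f x ^ 4) ^ ((1:ℝ)/2) * (∫ x in Ω, h x ^ 2) ^ ((1:ℝ)/2) := by
  have hpq : Real.HolderConjugate 2 2 := ⟨by norm_num, by norm_num, by norm_num⟩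
  have h1 := integral_mul_le_Lp_mul_Lq_of_nonneg (μ := volume.restrict Ω) hpq
    (f := fun x => f x ^ 2) (g := h)
    (Filter.Eventually.of_forall fun x => sq_nonneg _)
    (Filter.Eventually.of_forall fun x => hh0 x)
    (memLp_cont hm hb (hf.pow 2) _) (memLp_cont hm hb hh _)
  have e2 : ∀ a : ℝ, a ^ (2:ℝ) = a ^ 2 := fun a => by
    rw [show ((2:ℝ)) = ((2:ℕ):ℝ) by norm_num, Real.rpow_natCast]
  simp_rw [e2, ← pow_mul] at h1
  norm_num at h1
  convert h1 using 4 <;> norm_num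

lemma abs_sum_mul_le (a b : Fin n → ℝ) :
    |∑ i, a i * b i| ≤ Real.sqrt (∑ i, a i ^ 2) * Real.sqrt (∑ i, b i ^ 2) := by
  have h := Finset.sum_mul_sq_le_sq_mul_sq Finset.univ a b
  have h2 : (∑ i, a i * b i) ^ 2
      ≤ (Real.sqrt (∑ i, a i ^ 2) * Real.sqrt (∑ i, b i ^ 2)) ^ 2 := by
    rw [mul_pow, Real.sq_sqrt (by positivity), Real.sq_sqrt (by positivity)]
    exact h
  have h3 := Real.sqrt_le_sqrt h2
  rwa [Real.sqrt_sq_eq_abs, Real.sqrt_sq (by positivity)] at h3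

end helpers2

set_option maxHeartbeats 2000000 in
/-- Interpolation estimate for the divergence: for a bounded domain Ω with boundary
geometry controlled by K, ‖div u‖²_{L⁴(Ω)} ≤ C(K) ‖u‖_{L^∞(Ω)} ‖div u‖_{H¹(Ω)}. -/
theorem divergence_L4_interpolation (n : ℕ) (K : ℝ) (hK : 0 < K) :
    ∃ C > 0, ∀ (Ω : Set (Fin n → ℝ)) (u : (Fin n → ℝ) → Fin n → ℝ)
      (N : (Fin n → ℝ) → Fin n → ℝ),
      IsOpen Ω → Bornology.IsBounded Ω →
      ContDiff ℝ 2 u →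
      -- N is a C¹ extension of the outer unit normal with |∇N| ≤ K
      ContDiff ℝ 1 N → (∀ x, (∑ i, (N x i)^2) ≤ 1) →
      (∀ x ∈ frontier Ω, (∑ i, (N x i)^2) = 1) →
      (∀ x, (∑ i, ∑ j, (pd n i (fun y => N y j) x)^2) ≤ K^2) →
      -- N is the outer normal: the divergence theorem holds for C¹ vector fields
      (∀ w : (Fin n → ℝ) → Fin n → ℝ, ContDiff ℝ 1 w →
        (∫ x in Ω, divg n w x)
          = ∫ x in frontier Ω, (∑ i, w x i * N x i)
              ∂(MeasureTheory.Measure.hausdorffMeasure ((n : ℝ) - 1))) →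
      ((∫ x in Ω, (divg n u x)^4) ^ ((1:ℝ)/4)) ^ 2
        ≤ C * sSup ((fun x => Real.sqrt (∑ i, (u x i)^2)) '' Ω)
          * ((∫ x in Ω, (divg n u x)^2) ^ ((1:ℝ)/2)
            + (∫ x in Ω, (∑ i, (pd n i (fun y => divg n u y) x)^2)) ^ ((1:ℝ)/2)) := by
  refine ⟨6 + Real.sqrt n * K, by positivity, ?_⟩
  intro Ω u N hΩo hΩb hu hN hN1 hNfr hNK hdiv
  have hΩm : MeasurableSet Ω := hΩo.measurableSet
  set g : (Fin n → ℝ) → ℝ := divg n u with hgdef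
  have hg1 : ContDiff ℝ 1 g := contDiff_divg hu
  have hgc : Continuous g := hg1.continuous
  have hu1 : ContDiff ℝ 1 u := hu.of_le (by norm_num)
  have huc : Continuous u := hu1.continuous
  have hcl : IsCompact (closure Ω) :=
    Metric.isCompact_of_isClosed_isBounded isClosed_closure hΩb.closure
  set M : ℝ := sSup ((fun x => Real.sqrt (∑ i, (u x i)^2)) '' Ω) with hMdef
  -- boundedness facts about M
  have hfc : Continuous fun x => Real.sqrt (∑ i, (u x i)^2) := by
    exact Real.continuous_sqrt.comp (continuous_finset_sum _ fun i _ =>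
      ((continuous_apply i).comp huc).pow 2)
  have hbdd : BddAbove ((fun x => Real.sqrt (∑ i, (u x i)^2)) '' Ω) :=
    ((hcl.image hfc).bddAbove).mono (Set.image_mono subset_closure)
  have hMΩ : ∀ x ∈ Ω, Real.sqrt (∑ i, (u x i)^2) ≤ M := fun x hx =>
    le_csSup hbdd ⟨x, hx, rfl⟩
  have hMcl : ∀ x ∈ closure Ω, Real.sqrt (∑ i, (u x i)^2) ≤ M := by
    have hsub : closure Ω ⊆ {x | Real.sqrt (∑ i, (u x i)^2) ≤ M} :=
      closure_minimal hMΩ (isClosed_le hfc continuous_const)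
    exact fun x hx => hsub hx
  have hM0 : 0 ≤ M := by
    rcases Set.eq_empty_or_nonempty Ω with h | ⟨x, hx⟩
    · simp [hMdef, h, Real.sSup_empty]
    · exact (Real.sqrt_nonneg _).trans (hMΩ x hx)
  have hMu : ∀ x ∈ closure Ω, ∀ v : Fin n → ℝ,
      |∑ i, u x i * v i| ≤ M * Real.sqrt (∑ i, v i ^ 2) := fun x hx v => by
    refine (abs_sum_mul_le _ _).trans ?_
    exact mul_le_mul_of_nonneg_right (hMcl x hx) (Real.sqrt_nonneg _)
  -- bound on div N
  have hdN : ∀ x, |divg n N x| ≤ Real.sqrt n * K := by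
    intro x
    have h1 : (divg n N x) ^ 2 ≤ n * K ^ 2 := by
      have h2 : (∑ i, pd n i (fun y => N y i) x) ^ 2
          ≤ (n : ℝ) * ∑ i, (pd n i (fun y => N y i) x) ^ 2 := by
        have := sq_sum_le_card_mul_sum_sq (s := (Finset.univ : Finset (Fin n)))
          (f := fun i => pd n i (fun y => N y i) x)
        simpa using this
      have h3 : ∑ i, (pd n i (fun y => N y i) x) ^ 2
          ≤ ∑ i, ∑ j, (pd n i (fun y => N y j) x) ^ 2 :=
        Finset.sum_le_sum fun i _ =>
          Finset.single_le_sum (f := fun j => pd n i (fun y => N y j) x ^ 2)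
            (fun j _ => sq_nonneg _) (Finset.mem_univ i)
      calc (divg n N x) ^ 2 ≤ (n:ℝ) * ∑ i, (pd n i (fun y => N y i) x) ^ 2 := h2
        _ ≤ (n:ℝ) * ∑ i, ∑ j, (pd n i (fun y => N y j) x) ^ 2 := by
            exact mul_le_mul_of_nonneg_left h3 (Nat.cast_nonneg n)
        _ ≤ (n:ℝ) * K ^ 2 := mul_le_mul_of_nonneg_left (hNK x) (Nat.cast_nonneg n)
    rw [← Real.sqrt_sq_eq_abs]
    calc Real.sqrt ((divg n N x) ^ 2) ≤ Real.sqrt ((n:ℝ) * K ^ 2) := Real.sqrt_le_sqrt h1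
      _ = Real.sqrt n * K := by
          rw [Real.sqrt_mul (Nat.cast_nonneg n), Real.sqrt_sq hK.le]
  -- the test vector field
  set A : (Fin n → ℝ) → ℝ := fun x => |g x| ^ 3 with hAdef
  have hA1 : ContDiff ℝ 1 A := contDiff_abs_cube hg1
  set w₀ : (Fin n → ℝ) → Fin n → ℝ :=
    fun x i => M * A x * N x i - g x ^ 3 * u x i with hw₀def
  have hw₀ : ContDiff ℝ 1 w₀ := by
    apply contDiff_pi.2
    intro i
    exact ((contDiff_const.mul hA1).mul (contDiff_pi.1 hN i)).sub
      ((hg1.pow 3).mul (contDiff_pi.1 hu1 i))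
  -- the boundary term is nonnegative
  have hbd : 0 ≤ ∫ x in frontier Ω, (∑ i, w₀ x i * N x i)
      ∂(MeasureTheory.Measure.hausdorffMeasure ((n : ℝ) - 1)) := by
    refine setIntegral_nonneg isClosed_frontier.measurableSet fun x hx => ?_
    have hxc : x ∈ closure Ω := frontier_subset_closure hx
    have e : ∑ i, w₀ x i * N x i
        = M * A x * (∑ i, (N x i) ^ 2) - g x ^ 3 * (∑ i, u x i * N x i) := by
      have h1 : ∀ i, w₀ x i * N x i
          = M * A x * (N x i ^ 2) - g x ^ 3 * (u x i * N x i) := fun i => by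
        simp only [hw₀def]; ring
      rw [Finset.sum_congr rfl fun i _ => h1 i, Finset.sum_sub_distrib,
        ← Finset.mul_sum, ← Finset.mul_sum]
    rw [e, hNfr x hx, mul_one, sub_nonneg]
    have h2 : |∑ i, u x i * N x i| ≤ M := by
      have := hMu x hxc (N x)
      have hs : Real.sqrt (∑ i, (N x i) ^ 2) = 1 := by
        rw [hNfr x hx, Real.sqrt_one]
      rwa [hs, mul_one] at this
    calc g x ^ 3 * (∑ i, u x i * N x i)
        ≤ |g x ^ 3 * (∑ i, u x i * N x i)| := le_abs_self _
      _ = |g x| ^ 3 * |∑ i, u x i * N x i| := by rw [abs_mul, abs_pow]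
      _ ≤ |g x| ^ 3 * M := mul_le_mul_of_nonneg_left h2 (by positivity)
      _ = M * A x := by rw [hAdef]; ring
  -- pointwise divergence identity in the interior
  have hdw : ∀ x, divg n w₀ x
      = M * A x * divg n N x + 3 * M * |g x| * g x * (∑ i, N x i * pd n i g x)
        - (g x ^ 4 + 3 * g x ^ 2 * (∑ i, u x i * pd n i g x)) := by
    intro x
    have hgd : DifferentiableAt ℝ g x := hg1.differentiable one_ne_zero x
    have hNd : ∀ i : Fin n, DifferentiableAt ℝ (fun y => N y i) x := fun i =>
      (contDiff_pi.1 hN i).differentiable one_ne_zero x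
    have hud : ∀ i : Fin n, DifferentiableAt ℝ (fun y => u y i) x := fun i =>
      (contDiff_pi.1 hu1 i).differentiable one_ne_zero x
    have hAd : DifferentiableAt ℝ A x := hA1.differentiable one_ne_zero x
    have hMA : DifferentiableAt ℝ (fun y => M * A y) x := (differentiableAt_const M).mul hAd
    have hpdMA : ∀ i : Fin n, pd n i (fun y => M * A y) x
        = M * (3 * |g x| * g x * pd n i g x) := fun i => by
      rw [pd_const_mul M hAd i]
      congr 1
      exact pd_abs_cube hgd i
    have hcomp : ∀ i : Fin n, pd n i (fun y => w₀ y i) x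
        = (M * A x * pd n i (fun y => N y i) x
            + N x i * (M * (3 * |g x| * g x * pd n i g x)))
          - (g x ^ 3 * pd n i (fun y => u y i) x
            + u x i * (3 * g x ^ 2 * pd n i g x)) := by
      intro i
      have e : (fun y => w₀ y i)
          = fun y => (M * A y) * N y i - (g y ^ 3) * u y i := rfl
      rw [e, pd_sub (f := fun y => M * A y * N y i) (h := fun y => g y ^ 3 * u y i) (hMA.mul (hNd i)) (((hgd.pow 3)).mul (hud i)) i,
        pd_mul hMA (hNd i) i, pd_mul (f := fun y => g y ^ 3) (hgd.pow 3) (hud i) i,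
        hpdMA i, pd_pow3 hgd i]
    have hsum : divg n w₀ x = ∑ i, pd n i (fun y => w₀ y i) x := rfl
    rw [hsum, Finset.sum_congr rfl fun i _ => hcomp i, Finset.sum_sub_distrib]
    have t1 : ∑ i, M * A x * pd n i (fun y => N y i) x = M * A x * divg n N x := by
      rw [← Finset.mul_sum]; rfl
    have t2 : ∑ i, N x i * (M * (3 * |g x| * g x * pd n i g x))
        = 3 * M * |g x| * g x * (∑ i, N x i * pd n i g x) := by
      rw [Finset.mul_sum]; exact Finset.sum_congr rfl fun i _ => by ring
    have s1 : ∑ i, g x ^ 3 * pd n i (fun y => u y i) x = g x ^ 4 := by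
      rw [← Finset.mul_sum]
      have e : (∑ i, pd n i (fun y => u y i) x) = g x := rfl
      rw [e]; ring
    have s2 : ∑ i, u x i * (3 * g x ^ 2 * pd n i g x)
        = 3 * g x ^ 2 * (∑ i, u x i * pd n i g x) := by
      rw [Finset.mul_sum]; exact Finset.sum_congr rfl fun i _ => by ring
    rw [Finset.sum_add_distrib, Finset.sum_add_distrib, t1, t2, s1, s2]
  -- continuity facts
  have hcA : Continuous A := hA1.continuous
  have hcdN : Continuous (divg n N) := continuous_divg1 hN
  have hcpdg : ∀ i : Fin n, Continuous (pd n i g) := fun i => continuous_pd1 hg1 i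
  have hcNi : ∀ i : Fin n, Continuous fun x => N x i := fun i =>
    (continuous_apply i).comp hN.continuous
  have hcui : ∀ i : Fin n, Continuous fun x => u x i := fun i =>
    (continuous_apply i).comp huc
  set hnorm : (Fin n → ℝ) → ℝ := fun x => Real.sqrt (∑ i, (pd n i g x) ^ 2)
    with hnormdef
  have hchn : Continuous hnorm :=
    Real.continuous_sqrt.comp (continuous_finset_sum _ fun i _ => (hcpdg i).pow 2)
  have hhn0 : ∀ x, 0 ≤ hnorm x := fun x => Real.sqrt_nonneg _
  have hcF : Continuous (fun x => M * A x * divg n N x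
      + 3 * M * |g x| * g x * (∑ i, N x i * pd n i g x)) :=
    ((continuous_const.mul hcA).mul hcdN).add
      (((continuous_const.mul hgc.abs).mul hgc).mul
        (continuous_finset_sum _ fun i _ => (hcNi i).mul (hcpdg i)))
  have hcG : Continuous (fun x => g x ^ 4
      + 3 * g x ^ 2 * (∑ i, u x i * pd n i g x)) :=
    (hgc.pow 4).add ((continuous_const.mul (hgc.pow 2)).mul
      (continuous_finset_sum _ fun i _ => (hcui i).mul (hcpdg i)))
  have hcR : Continuous (fun x => M * Real.sqrt n * K * (g x ^ 2 * |g x|)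
      + 6 * M * (g x ^ 2 * hnorm x) - g x ^ 4) :=
    ((continuous_const.mul ((hgc.pow 2).mul hgc.abs)).add
      (continuous_const.mul ((hgc.pow 2).mul hchn))).sub (hgc.pow 4)
  -- from the divergence theorem: the interior integral is nonnegative
  have h0 : 0 ≤ ∫ x in Ω, (M * A x * divg n N x
      + 3 * M * |g x| * g x * (∑ i, N x i * pd n i g x)
      - (g x ^ 4 + 3 * g x ^ 2 * (∑ i, u x i * pd n i g x))) := by
    have e := hdiv w₀ hw₀
    have e2 : ∫ x in Ω, divg n w₀ x = ∫ x in Ω, (M * A x * divg n N x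
        + 3 * M * |g x| * g x * (∑ i, N x i * pd n i g x)
        - (g x ^ 4 + 3 * g x ^ 2 * (∑ i, u x i * pd n i g x))) :=
      integral_congr_ae (Filter.Eventually.of_forall fun x => hdw x)
    rw [← e2, e]
    exact hbd
  -- pointwise bound on the interior integrand
  have hpw : ∀ x ∈ Ω, M * A x * divg n N x
      + 3 * M * |g x| * g x * (∑ i, N x i * pd n i g x)
      - (g x ^ 4 + 3 * g x ^ 2 * (∑ i, u x i * pd n i g x))
      ≤ M * Real.sqrt n * K * (g x ^ 2 * |g x|)
        + 6 * M * (g x ^ 2 * hnorm x) - g x ^ 4 := by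
    intro x hx
    have hAe : A x = g x ^ 2 * |g x| := by
      show |g x| ^ 3 = g x ^ 2 * |g x|
      rw [← sq_abs]; ring
    have b1 : M * A x * divg n N x ≤ M * Real.sqrt n * K * (g x ^ 2 * |g x|) := by
      have h1 : divg n N x ≤ Real.sqrt n * K := (abs_le.1 (hdN x)).2
      have h2 : 0 ≤ M * A x := mul_nonneg hM0 (by rw [hAdef]; positivity)
      calc M * A x * divg n N x ≤ M * A x * (Real.sqrt n * K) :=
            mul_le_mul_of_nonneg_left h1 h2
        _ = M * Real.sqrt n * K * (g x ^ 2 * |g x|) := by rw [hAe]; ring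
    have hS : |∑ i, N x i * pd n i g x| ≤ hnorm x := by
      have h1 := abs_sum_mul_le (N x) (fun i => pd n i g x)
      have h2 : Real.sqrt (∑ i, (N x i) ^ 2) ≤ 1 := by
        rw [show (1:ℝ) = Real.sqrt 1 by rw [Real.sqrt_one]]
        exact Real.sqrt_le_sqrt (hN1 x)
      refine h1.trans ?_
      rw [hnormdef]
      calc Real.sqrt (∑ i, N x i ^ 2) * Real.sqrt (∑ i, (pd n i g x) ^ 2)
          ≤ 1 * Real.sqrt (∑ i, (pd n i g x) ^ 2) :=
            mul_le_mul_of_nonneg_right h2 (Real.sqrt_nonneg _)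
        _ = Real.sqrt (∑ i, (pd n i g x) ^ 2) := one_mul _
    have b2 : 3 * M * |g x| * g x * (∑ i, N x i * pd n i g x)
        ≤ 3 * M * (g x ^ 2 * hnorm x) := by
      have h1 : g x * (∑ i, N x i * pd n i g x) ≤ |g x| * hnorm x := by
        calc g x * (∑ i, N x i * pd n i g x)
            ≤ |g x * (∑ i, N x i * pd n i g x)| := le_abs_self _
          _ = |g x| * |∑ i, N x i * pd n i g x| := abs_mul _ _
          _ ≤ |g x| * hnorm x := mul_le_mul_of_nonneg_left hS (abs_nonneg _)
      have h2 : 0 ≤ 3 * M * |g x| := by positivity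
      calc 3 * M * |g x| * g x * (∑ i, N x i * pd n i g x)
          = (3 * M * |g x|) * (g x * (∑ i, N x i * pd n i g x)) := by ring
        _ ≤ (3 * M * |g x|) * (|g x| * hnorm x) := mul_le_mul_of_nonneg_left h1 h2
        _ = 3 * M * (|g x| ^ 2 * hnorm x) := by ring
        _ = 3 * M * (g x ^ 2 * hnorm x) := by rw [sq_abs]
    have b3 : -(3 * g x ^ 2 * (∑ i, u x i * pd n i g x))
        ≤ 3 * M * (g x ^ 2 * hnorm x) := by
      have h1 : |∑ i, u x i * pd n i g x| ≤ M * hnorm x := by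
        have := hMu x (subset_closure hx) (fun i => pd n i g x)
        rwa [hnormdef]
      calc -(3 * g x ^ 2 * (∑ i, u x i * pd n i g x))
          ≤ |3 * g x ^ 2 * (∑ i, u x i * pd n i g x)| := neg_le_abs _
        _ = 3 * g x ^ 2 * |∑ i, u x i * pd n i g x| := by
            rw [abs_mul, abs_of_nonneg (by positivity : (0:ℝ) ≤ 3 * g x ^ 2)]
        _ ≤ 3 * g x ^ 2 * (M * hnorm x) :=
            mul_le_mul_of_nonneg_left h1 (by positivity)
        _ = 3 * M * (g x ^ 2 * hnorm x) := by ring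
    linarith
  -- integrate the pointwise bound
  have hmono : ∫ x in Ω, (M * A x * divg n N x
      + 3 * M * |g x| * g x * (∑ i, N x i * pd n i g x)
      - (g x ^ 4 + 3 * g x ^ 2 * (∑ i, u x i * pd n i g x)))
      ≤ ∫ x in Ω, (M * Real.sqrt n * K * (g x ^ 2 * |g x|)
        + 6 * M * (g x ^ 2 * hnorm x) - g x ^ 4) :=
    setIntegral_mono_on (integrableOn_cont hΩb (hcF.sub hcG))
      (integrableOn_cont hΩb hcR) hΩm hpw
  have hsplit : ∫ x in Ω, (M * Real.sqrt n * K * (g x ^ 2 * |g x|)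
      + 6 * M * (g x ^ 2 * hnorm x) - g x ^ 4)
      = M * Real.sqrt n * K * (∫ x in Ω, g x ^ 2 * |g x|)
        + 6 * M * (∫ x in Ω, g x ^ 2 * hnorm x) - ∫ x in Ω, g x ^ 4 := by
    rw [integral_sub, integral_add, integral_const_mul, integral_const_mul]
    · exact integrableOn_cont hΩb (continuous_const.mul ((hgc.pow 2).mul hgc.abs))
    · exact integrableOn_cont hΩb (continuous_const.mul ((hgc.pow 2).mul hchn))
    · exact integrableOn_cont hΩb
        ((continuous_const.mul ((hgc.pow 2).mul hgc.abs)).add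
          (continuous_const.mul ((hgc.pow 2).mul hchn)))
    · exact integrableOn_cont hΩb (hgc.pow 4)
  have hkey : ∫ x in Ω, g x ^ 4
      ≤ M * Real.sqrt n * K * (∫ x in Ω, g x ^ 2 * |g x|)
        + 6 * M * (∫ x in Ω, g x ^ 2 * hnorm x) := by
    have := h0.trans (hmono.trans_eq hsplit)
    linarith
  -- Hölder estimates
  have hT2 : ∫ x in Ω, g x ^ 2 * |g x|
      ≤ (∫ x in Ω, g x ^ 4) ^ ((1:ℝ)/2) * (∫ x in Ω, g x ^ 2) ^ ((1:ℝ)/2) := by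
    have h := holder_sq hΩm hΩb hgc hgc.abs (fun x => abs_nonneg _)
    simpa [sq_abs] using h
  have hT1 : ∫ x in Ω, g x ^ 2 * hnorm x
      ≤ (∫ x in Ω, g x ^ 4) ^ ((1:ℝ)/2)
        * (∫ x in Ω, (∑ i, (pd n i g x) ^ 2)) ^ ((1:ℝ)/2) := by
    have h := holder_sq hΩm hΩb hgc hchn hhn0
    have e : ∀ x, hnorm x ^ 2 = ∑ i, (pd n i g x) ^ 2 := fun x =>
      Real.sq_sqrt (Finset.sum_nonneg fun i _ => sq_nonneg _)
    simp_rw [e] at h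
    exact h
  -- final arithmetic
  show ((∫ x in Ω, g x ^ 4) ^ ((1:ℝ)/4)) ^ 2
      ≤ (6 + Real.sqrt n * K) * M
        * ((∫ x in Ω, g x ^ 2) ^ ((1:ℝ)/2)
          + (∫ x in Ω, (∑ i, (pd n i g x) ^ 2)) ^ ((1:ℝ)/2))
  set P : ℝ := ∫ x in Ω, g x ^ 4 with hPdef
  have hP0 : 0 ≤ P := setIntegral_nonneg hΩm fun x _ => by positivity
  set Q : ℝ := (∫ x in Ω, g x ^ 2) ^ ((1:ℝ)/2) with hQdef
  set R : ℝ := (∫ x in Ω, (∑ i, (pd n i g x) ^ 2)) ^ ((1:ℝ)/2) with hRdef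
  have hQ0 : 0 ≤ Q :=
    Real.rpow_nonneg (setIntegral_nonneg hΩm fun x _ => by positivity) _
  have hR0 : 0 ≤ R := Real.rpow_nonneg
    (setIntegral_nonneg hΩm fun x _ => Finset.sum_nonneg fun i _ => sq_nonneg _) _
  set p : ℝ := P ^ ((1:ℝ)/2) with hpdef
  have hp0 : 0 ≤ p := Real.rpow_nonneg hP0 _
  have hpsq : p ^ 2 = P := by
    rw [hpdef, ← Real.rpow_natCast (P ^ ((1:ℝ)/2)) 2, ← Real.rpow_mul hP0]
    norm_num
  have hL : (P ^ ((1:ℝ)/4)) ^ 2 = p := by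
    rw [hpdef, ← Real.rpow_natCast (P ^ ((1:ℝ)/4)) 2, ← Real.rpow_mul hP0]
    norm_num
  have hmain : p ^ 2 ≤ M * Real.sqrt n * K * (p * Q) + 6 * M * (p * R) := by
    rw [hpsq]
    have c1 : 0 ≤ M * Real.sqrt n * K :=
      mul_nonneg (mul_nonneg hM0 (Real.sqrt_nonneg _)) hK.le
    have c2 : 0 ≤ 6 * M := by linarith
    calc P ≤ M * Real.sqrt n * K * (∫ x in Ω, g x ^ 2 * |g x|)
          + 6 * M * (∫ x in Ω, g x ^ 2 * hnorm x) := hkey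
      _ ≤ M * Real.sqrt n * K * (p * Q) + 6 * M * (p * R) :=
          add_le_add (mul_le_mul_of_nonneg_left hT2 c1)
            (mul_le_mul_of_nonneg_left hT1 c2)
  have hgoal : p ≤ (6 + Real.sqrt n * K) * M * (Q + R) := by
    rcases hp0.eq_or_lt with h | h
    · have hr : 0 ≤ (6 + Real.sqrt n * K) * M * (Q + R) :=
        mul_nonneg (mul_nonneg (by positivity) hM0) (by linarith)
      linarith
    · have h1 : p * p ≤ p * (M * Real.sqrt n * K * Q + 6 * M * R) := by
        nlinarith [hmain]
      have h2 : p ≤ M * Real.sqrt n * K * Q + 6 * M * R :=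
        le_of_mul_le_mul_left h1 h
      have e1 : 0 ≤ M * Q := mul_nonneg hM0 hQ0
      have e2 : 0 ≤ Real.sqrt n * K * (M * R) :=
        mul_nonneg (mul_nonneg (Real.sqrt_nonneg _) hK.le) (mul_nonneg hM0 hR0)
      nlinarith [h2, e1, e2]
  rw [hL]
  exact hgoal
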